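/- Let R_{α,β} = {ζ ∈ ℂ : 0 < Re ζ < α, −β < Im ζ < β} and D = Δ_R^{n−1} × R_{α,β} ⊂ ℂⁿ, where Δ_R is the disc of radius R. For 0 < r < r' < α and points z, w ∈ D with Re(z_n) = r and Re(w_n) = r', the Kobayashi distance satisfies d^K_D(z, w) ≥ (1/2) log(r'/r). -/

import Mathlib

/-
Projecting to the last coordinate is a holomorphic map `D → H` to the right half-plane, and the
Kobayashi metric of `H` is at least `|v| / (2 Re ζ)` (the Schwarz lemma after a Cayley transform).
Holomorphic maps decrease the Kobayashi metric, so along any `C¹` path `γ` in `D` the integrand of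
the Kobayashi length dominates `(Re γₙ)' / (2 Re γₙ) = (½ log Re γₙ)'`, which integrates to
`½ log (r' / r)`.

For the comparison of integrals the Kobayashi integrand must be integrable, not just junk-valued:
it is upper semicontinuous (a competing disc survives small perturbations of its centre and
derivative), hence measurable and bounded on `[0, 1]`. The infimum defining the distance is over a
nonempty set because `D` is convex.
-/

open Set Metric

/-- The Kobayashi infinitesimal pseudometric of a domain `D` in a complex normed space. -/
noncomputable def kobMetric {E : Type*} [NormedAddCommGroup E] [NormedSpace ℂ E]
    (D : Set E) (p v : E) : ℝ :=
  sInf {α : ℝ | 0 < α ∧ ∃ f : ℂ → E, DifferentiableOn ℂ f (ball (0:ℂ) 1) ∧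
    MapsTo f (ball (0:ℂ) 1) D ∧ f 0 = p ∧ fderiv ℂ f 0 1 = α⁻¹ • v}

/-- The Kobayashi length of a path `γ : [0,1] → D`. -/
noncomputable def kobLength {E : Type*} [NormedAddCommGroup E] [NormedSpace ℂ E]
    (D : Set E) (γ : ℝ → E) : ℝ :=
  ∫ t in (0:ℝ)..1, kobMetric D (γ t) (derivWithin γ (Icc 0 1) t)

/-- The (integrated) Kobayashi pseudodistance of `D`: the infimum of Kobayashi lengths of
`C¹` paths in `D` joining `p` to `q`. -/
noncomputable def kobDist {E : Type*} [NormedAddCommGroup E] [NormedSpace ℂ E]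
    (D : Set E) (p q : E) : ℝ :=
  sInf {L : ℝ | ∃ γ : ℝ → E, ContDiffOn ℝ 1 γ (Icc 0 1) ∧ MapsTo γ (Icc 0 1) D ∧
    γ 0 = p ∧ γ 1 = q ∧ L = kobLength D γ}

section KobayashiMetric

variable {E : Type*} [NormedAddCommGroup E] [NormedSpace ℂ E] {D : Set E} {p v : E} {a : ℝ}

open Topology

def kobAdmissible (D : Set E) (p v : E) : Set ℝ :=
  {α : ℝ | 0 < α ∧ ∃ f : ℂ → E, DifferentiableOn ℂ f (ball (0:ℂ) 1) ∧
    MapsTo f (ball (0:ℂ) 1) D ∧ f 0 = p ∧ fderiv ℂ f 0 1 = α⁻¹ • v}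

theorem kobMetric_eq_sInf (D : Set E) (p v : E) :
    kobMetric D p v = sInf (kobAdmissible D p v) := rfl

theorem kobAdmissible_bddBelow (D : Set E) (p v : E) : BddBelow (kobAdmissible D p v) :=
  ⟨0, fun _ h => h.1.le⟩

theorem kobMetric_nonneg (D : Set E) (p v : E) : 0 ≤ kobMetric D p v :=
  Real.sInf_nonneg fun _ h => h.1.le

theorem mem_kobAdmissible_of_hasDerivAt {f : ℂ → E} (ha : 0 < a)
    (hf : DifferentiableOn ℂ f (ball 0 1)) (hmaps : MapsTo f (ball 0 1) D) (hf0 : f 0 = p)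
    (hf' : HasDerivAt f (a⁻¹ • v) 0) : a ∈ kobAdmissible D p v :=
  ⟨ha, f, hf, hmaps, hf0, by rw [fderiv_apply_one_eq_deriv, hf'.deriv]⟩

theorem mem_kobAdmissible_of_ball_subset {ε : ℝ} (hball : ball p ε ⊆ D) (ha : 0 < a)
    (hv : ‖v‖ / a < ε) : a ∈ kobAdmissible D p v := by
  refine mem_kobAdmissible_of_hasDerivAt (f := fun ζ : ℂ => p + ζ • (a⁻¹ • v)) ha
    (fun ζ _ => by fun_prop) (fun ζ hζ => hball ?_)
    (by simp) (by simpa using ((hasDerivAt_id (0:ℂ)).smul_const (a⁻¹ • v)).const_add p)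
  rw [mem_ball, dist_eq_norm, add_sub_cancel_left, norm_smul, norm_smul, Real.norm_eq_abs,
    abs_of_pos (inv_pos.2 ha), inv_mul_eq_div]
  exact (mul_le_of_le_one_left (by positivity)
    (by simpa using (mem_ball_zero_iff.1 hζ).le)).trans_lt hv

theorem kobAdmissible_nonempty (hD : IsOpen D) (hp : p ∈ D) (v : E) :
    (kobAdmissible D p v).Nonempty := by
  obtain ⟨ε, hε, hball⟩ := Metric.isOpen_iff.1 hD p hp
  refine ⟨‖v‖ / ε + 1, mem_kobAdmissible_of_ball_subset hball (by positivity) ?_⟩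
  rw [div_lt_iff₀ (by positivity), mul_add, mul_div_cancel₀ _ hε.ne', mul_one]
  linarith

theorem eventually_div_mem_kobAdmissible (hD : IsOpen D) (h : a ∈ kobAdmissible D p v)
    {l : ℝ} (hl0 : 0 < l) (hl1 : l < 1) :
    ∀ᶠ x : E × E in 𝓝 (p, v), a / l ∈ kobAdmissible D x.1 x.2 := by
  obtain ⟨ha, f, hf, hmaps, hf0, hf'⟩ := h
  have hsub : closedBall (0:ℂ) l ⊆ ball 0 1 := closedBall_subset_ball hl1
  -- `ζ ↦ f (l ζ)` has image in a compact subset of `D`, so it survives a small affine correction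
  -- fixing the centre and the derivative.
  obtain ⟨δ, hδ, hthick⟩ := ((isCompact_closedBall 0 l).image_of_continuousOn
    (hf.continuousOn.mono hsub)).exists_thickening_subset_open hD
    (hmaps.mono_left hsub).image_subset
  have hnear : ∀ᶠ x : E × E in 𝓝 (p, v), ‖x.1 - p‖ + ‖(l / a) • (x.2 - v)‖ < δ :=
    (by fun_prop : Continuous fun x : E × E => ‖x.1 - p‖ + ‖(l / a) • (x.2 - v)‖).continuousAt
      |>.eventually_lt continuousAt_const (by simpa using hδ)
  filter_upwards [hnear] with ⟨p', v'⟩ hx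
  have hscale : MapsTo (fun ζ : ℂ => (l : ℂ) * ζ) (ball 0 1) (closedBall 0 l) := by
    intro ζ hζ
    rw [mem_ball_zero_iff] at hζ
    rw [mem_closedBall_zero_iff, norm_mul, Complex.norm_real, Real.norm_of_nonneg hl0.le]
    exact mul_le_of_le_one_right hl0.le hζ.le
  have hfd : HasDerivAt f (a⁻¹ • v) 0 := by
    have hf0' := hf.differentiableAt (isOpen_ball.mem_nhds (mem_ball_self one_pos))
    rw [← hf', fderiv_apply_one_eq_deriv]
    exact hf0'.hasDerivAt
  refine mem_kobAdmissible_of_hasDerivAt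
    (f := fun ζ => f (l * ζ) + ((p' - p) + ζ • ((l / a) • (v' - v)))) (by positivity)
    ((hf.comp (by fun_prop) (hscale.mono_right hsub)).add (by fun_prop)) (fun ζ hζ => ?_)
    (by simp [hf0]) ?_
  · refine hthick (mem_thickening_iff.2 ⟨f (l * ζ), mem_image_of_mem f (hscale hζ), ?_⟩)
    rw [dist_eq_norm, add_sub_cancel_left]
    refine (norm_add_le _ _).trans_lt (lt_of_le_of_lt ?_ hx)
    rw [norm_smul]
    gcongr
    exact mul_le_of_le_one_left (norm_nonneg _) (mem_ball_zero_iff.1 hζ).le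
  · have hlin : HasDerivAt (fun ζ : ℂ => (l : ℂ) * ζ) (l : ℂ) 0 := by
      simpa using (hasDerivAt_id (0 : ℂ)).const_mul (l : ℂ)
    have hcomp := (HasDerivAt.scomp (0 : ℂ) (by rwa [mul_zero]) hlin).add
      (((hasDerivAt_id (0 : ℂ)).smul_const ((l / a) • (v' - v))).const_add (p' - p))
    convert hcomp using 1
    · ext ζ; simp
    · simp only [one_smul, Complex.coe_smul, smul_smul, inv_div]
      rw [smul_sub, ← div_eq_mul_inv, add_sub_cancel]

theorem upperSemicontinuousAt_kobMetric (hD : IsOpen D) (hp : p ∈ D) (v : E) :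
    UpperSemicontinuousAt (fun x : E × E => kobMetric D x.1 x.2) (p, v) := by
  intro c (hc : kobMetric D p v < c)
  rw [kobMetric_eq_sInf] at hc
  obtain ⟨a, ha, hac⟩ := exists_lt_of_csInf_lt (kobAdmissible_nonempty hD hp v) hc
  have hc0 : 0 < c := ha.1.trans hac
  obtain ⟨l, hal, hl1⟩ := exists_between ((div_lt_one hc0).2 hac)
  have hl0 : 0 < l := (div_pos ha.1 hc0).trans hal
  filter_upwards [eventually_div_mem_kobAdmissible hD ha hl0 hl1] with x hx
  refine (csInf_le (kobAdmissible_bddBelow _ _ _) hx).trans_lt ?_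
  rw [div_lt_iff₀ hl0]
  rwa [div_lt_iff₀ hc0, mul_comm] at hal

end KobayashiMetric

theorem add_conj_ne_zero_of_re_pos {w p : ℂ} (hw : 0 < w.re) (hp : 0 < p.re) :
    w + (starRingEnd ℂ) p ≠ 0 := fun h => by
  have := congrArg Complex.re h
  simp only [Complex.add_re, Complex.conj_re, Complex.zero_re] at this
  linarith

theorem norm_sub_div_add_conj_lt_one {w p : ℂ} (hw : 0 < w.re) (hp : 0 < p.re) :
    ‖(w - p) / (w + (starRingEnd ℂ) p)‖ < 1 := by
  rw [norm_div, div_lt_one (norm_pos_iff.2 (add_conj_ne_zero_of_re_pos hw hp)),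
    ← sq_lt_sq₀ (norm_nonneg _) (norm_nonneg _), Complex.sq_norm, Complex.sq_norm]
  simp only [Complex.normSq_apply, Complex.sub_re, Complex.sub_im, Complex.add_re,
    Complex.add_im, Complex.conj_re, Complex.conj_im]
  nlinarith

theorem norm_deriv_zero_le_two_mul_re {h : ℂ → ℂ} (hd : DifferentiableOn ℂ h (ball 0 1))
    (hm : MapsTo h (ball 0 1) {w : ℂ | 0 < w.re}) :
    ‖deriv h 0‖ ≤ 2 * (h 0).re := by
  have h0 : (0 : ℂ) ∈ ball (0 : ℂ) 1 := mem_ball_self one_pos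
  set p := h 0
  have hp : 0 < p.re := hm h0
  have hsum : p + (starRingEnd ℂ) p = ((2 * p.re : ℝ) : ℂ) := Complex.add_conj p
  have hden : ∀ ζ ∈ ball (0 : ℂ) 1, h ζ + (starRingEnd ℂ) p ≠ 0 := fun ζ hζ =>
    add_conj_ne_zero_of_re_pos (hm hζ) hp
  -- Compose with the Cayley transform of the half-plane centred at `p` and apply Schwarz.
  set g : ℂ → ℂ := fun ζ => (h ζ - p) / (h ζ + (starRingEnd ℂ) p)
  have hgd : DifferentiableOn ℂ g (ball 0 1) := (hd.sub_const p).div (hd.add_const _) hden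
  have hgm : MapsTo g (ball 0 1) (closedBall (g 0) 1) := fun ζ hζ => by
    rw [show g 0 = 0 by simp [g, p], mem_closedBall_zero_iff]
    exact (norm_sub_div_add_conj_lt_one (hm hζ) hp).le
  have hh : HasDerivAt h (deriv h 0) 0 :=
    (hd.differentiableAt (isOpen_ball.mem_nhds h0)).hasDerivAt
  have hg : HasDerivAt g _ 0 := (hh.sub_const p).div (hh.add_const _) (hden 0 h0)
  have := Complex.norm_deriv_le_div_of_mapsTo_ball hgd hgm one_pos
  rw [hg.deriv, sub_self, zero_mul, sub_zero, hsum, norm_div, norm_mul, norm_pow,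
    Complex.norm_real, Real.norm_of_nonneg (by positivity), div_one, div_le_one (by positivity),
    sq] at this
  exact le_of_mul_le_mul_right this (by positivity)

section KobayashiLength

variable {E : Type*} [NormedAddCommGroup E] [NormedSpace ℂ E] {D : Set E}

open Topology MeasureTheory

theorem norm_apply_div_le_kobMetric (hD : IsOpen D) {L : E →L[ℂ] ℂ}
    (hL : MapsTo L D {w : ℂ | 0 < w.re}) {p : E} (hp : p ∈ D) (v : E) :
    ‖L v‖ / (2 * (L p).re) ≤ kobMetric D p v := by
  rw [kobMetric_eq_sInf]
  refine le_csInf (kobAdmissible_nonempty hD hp v) ?_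
  rintro a ⟨ha, f, hf, hmaps, hf0, hf'⟩
  have hderiv : HasDerivAt (L ∘ f) (a⁻¹ • L v) 0 := by
    have hfd := hf.differentiableAt (isOpen_ball.mem_nhds (mem_ball_self one_pos))
    rw [← L.map_smul_of_tower, ← hf', fderiv_apply_one_eq_deriv]
    exact L.hasFDerivAt.comp_hasDerivAt 0 hfd.hasDerivAt
  have hschwarz := norm_deriv_zero_le_two_mul_re (L.differentiable.comp_differentiableOn hf)
    (hL.comp hmaps)
  rw [hderiv.deriv, Function.comp_apply, hf0, norm_smul, Real.norm_of_nonneg (by positivity),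
    inv_mul_le_iff₀ ha] at hschwarz
  rw [div_le_iff₀ (by linarith [show 0 < (L p).re from hL hp])]
  linarith

theorem integrableOn_Icc_of_upperSemicontinuousOn {f : ℝ → ℝ} {a b : ℝ} (hab : a ≤ b)
    (hf : UpperSemicontinuousOn f (Icc a b)) (hf0 : ∀ t ∈ Icc a b, 0 ≤ f t) :
    IntegrableOn f (Icc a b) := by
  set g : ℝ → ℝ := fun t => f (projIcc a b hab t)
  have hg : UpperSemicontinuous g := by
    rw [← upperSemicontinuousOn_univ_iff]
    exact hf.comp (continuous_subtype_val.comp continuous_projIcc).continuousOn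
      fun t _ => (projIcc a b hab t).2
  obtain ⟨M, hM⟩ := hf.bddAbove_of_isCompact isCompact_Icc
  have hgint : IntegrableOn g (Icc a b) := by
    refine Measure.integrableOn_of_bounded (M := M) measure_Icc_lt_top.ne
      hg.measurable.aestronglyMeasurable (Filter.Eventually.of_forall fun t => ?_)
    have ht := (projIcc a b hab t).2
    rw [Real.norm_of_nonneg (hf0 _ ht)]
    exact hM (mem_image_of_mem f ht)
  exact hgint.congr_fun (fun t ht => by simp only [g, projIcc_of_mem hab ht]) measurableSet_Icc

theorem integrableOn_kobMetric_derivWithin (hD : IsOpen D) {γ : ℝ → E}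
    (hγ : ContDiffOn ℝ 1 γ (Icc 0 1)) (hmaps : MapsTo γ (Icc 0 1) D) :
    IntegrableOn (fun t => kobMetric D (γ t) (derivWithin γ (Icc 0 1) t)) (Icc 0 1) := by
  refine integrableOn_Icc_of_upperSemicontinuousOn zero_le_one ?_
    fun t _ => kobMetric_nonneg _ _ _
  have husc : UpperSemicontinuousOn (fun x : E × E => kobMetric D x.1 x.2) (D ×ˢ univ) :=
    fun x hx => (upperSemicontinuousAt_kobMetric hD hx.1 x.2).upperSemicontinuousWithinAt _
  exact husc.comp (hγ.continuousOn.prodMk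
    (hγ.continuousOn_derivWithin (uniqueDiffOn_Icc one_pos) le_rfl))
    fun t ht => ⟨hmaps ht, mem_univ _⟩

theorem half_mul_log_div_le_kobLength (hD : IsOpen D) {L : E →L[ℂ] ℂ}
    (hL : MapsTo L D {w : ℂ | 0 < w.re}) {γ : ℝ → E}
    (hγ : ContDiffOn ℝ 1 γ (Icc 0 1)) (hmaps : MapsTo γ (Icc 0 1) D) :
    1 / 2 * Real.log ((L (γ 1)).re / (L (γ 0)).re) ≤ kobLength D γ := by
  have hpos : ∀ t ∈ Icc (0:ℝ) 1, 0 < (L (γ t)).re := fun t ht => hL (hmaps ht)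
  have hderiv : ∀ t ∈ Ioo (0:ℝ) 1, HasDerivAt (fun s => 1 / 2 * Real.log (L (γ s)).re)
      ((L (derivWithin γ (Icc 0 1) t)).re / (2 * (L (γ t)).re)) t := by
    intro t ht
    have hmem : Icc (0:ℝ) 1 ∈ 𝓝 t := Icc_mem_nhds ht.1 ht.2
    have hγt : HasDerivAt γ (derivWithin γ (Icc 0 1) t) t := by
      rw [derivWithin_of_mem_nhds hmem]
      exact ((hγ.differentiableOn one_ne_zero t (Ioo_subset_Icc_self ht)).differentiableAt
        hmem).hasDerivAt
    have hre : HasDerivAt (fun s => (L (γ s)).re) (L (derivWithin γ (Icc 0 1) t)).re t :=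
      (Complex.reCLM.comp (L.restrictScalars ℝ)).hasFDerivAt.comp_hasDerivAt t hγt
    refine ((hre.log (hpos t (Ioo_subset_Icc_self ht)).ne').const_mul (1 / 2)).congr_deriv ?_
    ring
  have hbound : ∀ t ∈ Ioo (0:ℝ) 1,
      (L (derivWithin γ (Icc 0 1) t)).re / (2 * (L (γ t)).re) ≤
      kobMetric D (γ t) (derivWithin γ (Icc 0 1) t) := fun t ht =>
    (div_le_div_of_nonneg_right ((le_abs_self _).trans (Complex.abs_re_le_norm _))
      (by linarith [hpos t (Ioo_subset_Icc_self ht)])).trans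
      (norm_apply_div_le_kobMetric hD hL (hmaps (Ioo_subset_Icc_self ht)) _)
  have hcont : ContinuousOn (fun s => 1 / 2 * Real.log (L (γ s)).re) (Icc 0 1) :=
    continuousOn_const.mul ((Complex.continuous_re.comp_continuousOn
      (L.continuous.comp_continuousOn hγ.continuousOn)).log
      fun t ht => (hpos t ht).ne')
  have := intervalIntegral.sub_le_integral_of_hasDeriv_right_of_le zero_le_one hcont
    (fun t ht => (hderiv t ht).hasDerivWithinAt)
    (integrableOn_kobMetric_derivWithin hD hγ hmaps) hbound
  rwa [← mul_sub, ← Real.log_div (hpos 1 (by simp)).ne' (hpos 0 (by simp)).ne'] at this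

end KobayashiLength

theorem le_kobDist_of_convex {E : Type*} [NormedAddCommGroup E] [NormedSpace ℂ E] {D : Set E}
    (hD : Convex ℝ D) {z w : E} (hz : z ∈ D) (hw : w ∈ D) {c : ℝ}
    (h : ∀ γ : ℝ → E, ContDiffOn ℝ 1 γ (Icc 0 1) → MapsTo γ (Icc 0 1) D → γ 0 = z → γ 1 = w →
      c ≤ kobLength D γ) :
    c ≤ kobDist D z w := by
  refine le_csInf ⟨_, fun t : ℝ => z + t • (w - z), by fun_prop,
    fun t ht => hD.add_smul_sub_mem hz hw ht, by simp, by simp, rfl⟩ ?_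
  rintro L ⟨γ, hγ, hmaps, h0, h1, rfl⟩
  exact h γ hγ hmaps h0 h1

/-- The domain `Δ_R^n × R_{α,β} ⊆ ℂ^{n+1}`. -/
def boxDomain (n : ℕ) (R α β : ℝ) : Set (EuclideanSpace ℂ (Fin (n + 1))) :=
  {z | (∀ i : Fin n, ‖z i.castSucc‖ < R) ∧
    0 < (z (Fin.last n)).re ∧ (z (Fin.last n)).re < α ∧
    -β < (z (Fin.last n)).im ∧ (z (Fin.last n)).im < β}

section BoxDomain

variable (n : ℕ) (R α β : ℝ)

theorem isOpen_boxDomain : IsOpen (boxDomain n R α β) := by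
  have hre : Continuous fun z : EuclideanSpace ℂ (Fin (n + 1)) => (z (Fin.last n)).re := by
    fun_prop
  have him : Continuous fun z : EuclideanSpace ℂ (Fin (n + 1)) => (z (Fin.last n)).im := by
    fun_prop
  simp only [boxDomain, ofPred_and, ofPred_forall]
  exact (isOpen_iInter_of_finite fun i => isOpen_lt (by fun_prop) continuous_const).inter
    ((isOpen_lt continuous_const hre).inter ((isOpen_lt hre continuous_const).inter
      ((isOpen_lt continuous_const him).inter (isOpen_lt him continuous_const))))

theorem convex_boxDomain : Convex ℝ (boxDomain n R α β) := by
  have hcoord (i : Fin (n + 1)) : IsLinearMap ℝ fun z : EuclideanSpace ℂ (Fin (n + 1)) => z i :=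
    ⟨fun _ _ => rfl, fun _ _ => rfl⟩
  have hre : IsLinearMap ℝ fun z : EuclideanSpace ℂ (Fin (n + 1)) => (z (Fin.last n)).re :=
    ⟨fun _ _ => rfl, fun _ _ => by simp⟩
  have him : IsLinearMap ℝ fun z : EuclideanSpace ℂ (Fin (n + 1)) => (z (Fin.last n)).im :=
    ⟨fun _ _ => rfl, fun _ _ => by simp⟩
  have hdisc (i : Fin (n + 1)) : Convex ℝ {z : EuclideanSpace ℂ (Fin (n + 1)) | ‖z i‖ < R} := by
    simpa only [preimage, mem_ball_zero_iff] using
      (convex_ball (0 : ℂ) R).is_linear_preimage (hcoord i)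
  simp only [boxDomain, ofPred_and, ofPred_forall]
  exact (convex_iInter fun i : Fin n => hdisc i.castSucc).inter
    ((convex_halfSpace_gt hre 0).inter ((convex_halfSpace_lt hre α).inter
      ((convex_halfSpace_gt him (-β)).inter (convex_halfSpace_lt him β))))

theorem mapsTo_proj_last_boxDomain :
    MapsTo (EuclideanSpace.proj (Fin.last n) : EuclideanSpace ℂ (Fin (n + 1)) →L[ℂ] ℂ)
      (boxDomain n R α β) {w : ℂ | 0 < w.re} :=
  fun _ hz => hz.2.1

end BoxDomain

theorem boxing_lemma_general
    (n : ℕ) (R α β : ℝ)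
    (D : Set (EuclideanSpace ℂ (Fin (n + 1))))
    (hD : D = {z : EuclideanSpace ℂ (Fin (n + 1)) |
      (∀ i : Fin n, ‖z i.castSucc‖ < R) ∧
      0 < (z (Fin.last n)).re ∧ (z (Fin.last n)).re < α ∧
      -β < (z (Fin.last n)).im ∧ (z (Fin.last n)).im < β})
    (r r' : ℝ)
    (z w : EuclideanSpace ℂ (Fin (n + 1))) (hz : z ∈ D) (hw : w ∈ D)
    (hzr : (z (Fin.last n)).re = r) (hwr : (w (Fin.last n)).re = r') :
    (1 / 2) * Real.log (r' / r) ≤ kobDist D z w := by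
  subst hD
  refine le_kobDist_of_convex (convex_boxDomain n R α β) hz hw fun γ hγ hmaps h0 h1 => ?_
  have := half_mul_log_div_le_kobLength (isOpen_boxDomain n R α β)
    (mapsTo_proj_last_boxDomain n R α β) hγ hmaps
  simpa [h0, h1, hzr, hwr] using this

/-- Boxing Lemma: with `R_{α,β} = {0 < Re ζ < α, |Im ζ| < β}` and
`D = Δ_R^{n} × R_{α,β} ⊆ ℂ^{n+1}`, for `0 < r < r' < α` and `z, w ∈ D` with
`Re z_n = r`, `Re w_n = r'` one has `d^K_D(z, w) ≥ (1/2) log (r' / r)`. -/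
theorem boxing_lemma
    (n : ℕ) (R α β : ℝ) (hR : 0 < R) (hα : 0 < α) (hβ : 0 < β)
    (D : Set (EuclideanSpace ℂ (Fin (n + 1))))
    (hD : D = {z : EuclideanSpace ℂ (Fin (n + 1)) |
      (∀ i : Fin n, ‖z i.castSucc‖ < R) ∧
      0 < (z (Fin.last n)).re ∧ (z (Fin.last n)).re < α ∧
      -β < (z (Fin.last n)).im ∧ (z (Fin.last n)).im < β})
    (r r' : ℝ) (hr : 0 < r) (hrr' : r < r') (hr'α : r' < α)
    (z w : EuclideanSpace ℂ (Fin (n + 1))) (hz : z ∈ D) (hw : w ∈ D)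
    (hzr : (z (Fin.last n)).re = r) (hwr : (w (Fin.last n)).re = r') :
    (1 / 2) * Real.log (r' / r) ≤ kobDist D z w :=
  boxing_lemma_general n R α β D hD r r' z w hz hw hzr hwr
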